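/- arXiv:2203.14554 — 3 statements merged into one kernel-verified Lean document; each statement's English description precedes it below -/
import Mathlib

section
/- With the setting of the concentration inequality (constant drift α, N independent particles Y^k, empirical measure m^N_{Y_h}, and m(h) solving the drift-heat equation from the empirical initial condition), for any 1-Lipschitz function φ : ℝ^d → ℝ and any x > 0, ℙ[∫φ d(m(h) − m^N_{Y_h}) > x] ≤ exp(−N x² / (C h)) for a constant C depending only on d. -/
/-!
Write `a_k = y0 k + h • α` and `X_k = E φ(a_k + √2 Z) - φ(a_k + √2 B^k_h)` with `Z ~ N(0, h I_d)`;
the deviation in the event is the mean of the independent variables `X_k`. Each `X_k` is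
sub-Gaussian with variance proxy `4 d² h`: for a Lipschitz `F` and an independent copy `Z'` of `Z`,
Jensen gives `E e^{t(E F - F(Z))} ≤ E e^{tF(Z)} E e^{-tF(Z')} = E cosh (t (F Z - F Z'))`, and
bounding `|Z - Z'|` by `√d` times its largest coordinate reduces the right side to the
one-dimensional Gaussian moments `E cosh (c (Z_i - Z'_i)) = e^{c² h}`. Hoeffding's inequality for
sums of independent sub-Gaussian variables then gives the tail bound with `C = 8 d²`.
-/

open MeasureTheory ProbabilityTheory Metric Set

/-- The centered Gaussian measure on `ℝ^d` with covariance `v·I_d`. -/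
noncomputable def stdGaussianE (d : ℕ) (v : ℝ) : Measure (EuclideanSpace ℝ (Fin d)) :=
  Measure.map (MeasurableEquiv.toLp 2 (Fin d → ℝ))
    (Measure.pi fun _ : Fin d => gaussianReal 0 (Real.toNNReal v))

/-- The empirical measure of the points `y 0, ..., y (N-1)`. -/
noncomputable def emp {d N : ℕ} (y : Fin N → EuclideanSpace ℝ (Fin d)) :
    Measure (EuclideanSpace ℝ (Fin d)) :=
  (N : ENNReal)⁻¹ • ∑ k, Measure.dirac (y k)

/-- The solution at time `h` of `∂_t m + α·Dm - Δm = 0` started from the empirical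
measure of `y`. -/
noncomputable def heatSol {d N : ℕ} (y : Fin N → EuclideanSpace ℝ (Fin d))
    (α : EuclideanSpace ℝ (Fin d)) (h : ℝ) : Measure (EuclideanSpace ℝ (Fin d)) :=
  Measure.map (fun p : EuclideanSpace ℝ (Fin d) × EuclideanSpace ℝ (Fin d) =>
      p.1 + h • α + p.2) ((emp y).prod (stdGaussianE d (2 * h)))

open Real NNReal
open scoped ENNReal

section ExponentialMoments

variable {Ω : Type*} [MeasurableSpace Ω] {μ : Measure Ω} {F : Ω → ℝ}

lemma integrable_of_forall_integrable_exp_mul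
    (hF : ∀ t, Integrable (fun ω ↦ exp (t * F ω)) μ) : Integrable F μ :=
  integrable_of_mem_interior_integrableExpSet (by
    rw [show integrableExpSet F μ = univ from eq_univ_of_forall hF, interior_univ]
    exact mem_univ _)

lemma cosh_mul_sub_eq (t a b : ℝ) :
    cosh (t * (a - b)) = (exp (t * a) * exp (-t * b) + exp (-t * a) * exp (t * b)) / 2 := by
  simp only [cosh_eq, ← exp_add]; ring_nf

lemma integrable_cosh_mul_sub [SFinite μ] {t : ℝ}
    (ht : Integrable (fun ω ↦ exp (t * F ω)) μ) (ht' : Integrable (fun ω ↦ exp (-t * F ω)) μ) :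
    Integrable (fun p ↦ cosh (t * (F p.1 - F p.2))) (μ.prod μ) := by
  simp_rw [cosh_mul_sub_eq]
  exact ((ht.mul_prod ht').add (ht'.mul_prod ht)).div_const 2

lemma integral_cosh_mul_sub [SFinite μ] {t : ℝ}
    (ht : Integrable (fun ω ↦ exp (t * F ω)) μ) (ht' : Integrable (fun ω ↦ exp (-t * F ω)) μ) :
    ∫ p, cosh (t * (F p.1 - F p.2)) ∂(μ.prod μ) = mgf F μ t * mgf F μ (-t) := by
  have hswap : ∫ p, exp (-t * F p.1) * exp (t * F p.2) ∂(μ.prod μ)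
      = ∫ p, exp (t * F p.1) * exp (-t * F p.2) ∂(μ.prod μ) := by
    rw [← integral_prod_swap]; congr 1; ext p; exact mul_comm _ _
  simp_rw [cosh_mul_sub_eq]
  rw [integral_div, integral_add (ht.mul_prod ht') (ht'.mul_prod ht), hswap, mgf, mgf,
    ← integral_prod_mul]
  ring

variable [IsProbabilityMeasure μ]

lemma exp_mul_integral_le_mgf (hF : ∀ t, Integrable (fun ω ↦ exp (t * F ω)) μ) (t : ℝ) :
    exp (t * ∫ ω, F ω ∂μ) ≤ mgf F μ t := by
  rw [← integral_const_mul]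
  exact convexOn_exp.map_integral_le continuousOn_exp isClosed_univ (by simp)
    ((integrable_of_forall_integrable_exp_mul hF).const_mul t) (hF t)

lemma mgf_sub_integral_le_mgf_mul_mgf (hF : ∀ t, Integrable (fun ω ↦ exp (t * F ω)) μ)
    (t : ℝ) :
    mgf (fun ω ↦ F ω - ∫ ω, F ω ∂μ) μ t ≤ mgf F μ t * mgf F μ (-t) := by
  simp_rw [sub_eq_add_neg, mgf_add_const, mul_neg, ← neg_mul]
  exact mul_le_mul_of_nonneg_left (exp_mul_integral_le_mgf hF (-t)) mgf_nonneg

end ExponentialMoments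

lemma EuclideanSpace.norm_le_sum_abs {ι : Type*} [Fintype ι] (z : EuclideanSpace ℝ ι) :
    ‖z‖ ≤ ∑ i, |z i| := by
  rw [EuclideanSpace.norm_eq, sqrt_le_iff]
  refine ⟨by positivity, ?_⟩
  simp_rw [Real.norm_eq_abs]
  exact Finset.sum_sq_le_sq_sum_of_nonneg fun i _ ↦ abs_nonneg _

lemma exp_abs_le_exp_add_exp_neg (x : ℝ) : exp |x| ≤ exp x + exp (-x) := by
  rcases abs_cases x with ⟨hx, -⟩ | ⟨hx, -⟩ <;> rw [hx] <;> linarith [exp_pos x, exp_pos (-x)]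

lemma cosh_mul_norm_le {ι : Type*} [Fintype ι] (w : EuclideanSpace ℝ ι) {s : ℝ} (hs : 0 ≤ s) :
    cosh (s * ‖w‖) ≤ 1 + ∑ i, (cosh (s * √(Fintype.card ι) * w i) - 1) := by
  rcases isEmpty_or_nonempty ι with hι | hι
  · simp [Subsingleton.elim w 0]
  obtain ⟨j, -, hj⟩ := Finset.exists_max_image Finset.univ (fun i ↦ |w i|) Finset.univ_nonempty
  have hnorm : ‖w‖ ≤ √(Fintype.card ι) * |w j| := by
    rw [EuclideanSpace.norm_eq, ← sqrt_sq (abs_nonneg (w j)), ← sqrt_mul (Nat.cast_nonneg _)]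
    gcongr
    calc ∑ i, ‖w i‖ ^ 2 ≤ ∑ _i : ι, |w j| ^ 2 :=
          Finset.sum_le_sum fun i _ ↦ by
            rw [Real.norm_eq_abs]
            exact pow_le_pow_left₀ (abs_nonneg _) (hj i (Finset.mem_univ i)) 2
      _ = Fintype.card ι * |w j| ^ 2 := by simp
  have hterm : ∀ i, 0 ≤ cosh (s * √(Fintype.card ι) * w i) - 1 := fun i ↦
    sub_nonneg.mpr (one_le_cosh _)
  calc cosh (s * ‖w‖) ≤ cosh (s * √(Fintype.card ι) * w j) := by
        rw [cosh_le_cosh, abs_of_nonneg (by positivity), abs_mul, abs_of_nonneg (by positivity),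
          mul_assoc]
        gcongr
    _ ≤ 1 + ∑ i, (cosh (s * √(Fintype.card ι) * w i) - 1) := by
        linarith [Finset.single_le_sum (fun i _ ↦ hterm i) (Finset.mem_univ j)]

namespace stdGaussianE

variable {d : ℕ}

instance (v : ℝ) : IsProbabilityMeasure (stdGaussianE d v) :=
  Measure.isProbabilityMeasure_map (by fun_prop)

lemma map_eval (v : ℝ≥0) (i : Fin d) :
    (stdGaussianE d v).map (fun z ↦ z i) = gaussianReal 0 v := by
  rw [stdGaussianE, Measure.map_map (by fun_prop) (by fun_prop), toNNReal_coe]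
  exact (measurePreserving_eval _ i).map_eq

lemma mgf_eval (v : ℝ≥0) (i : Fin d) (t : ℝ) :
    mgf (fun z ↦ z i) (stdGaussianE d v) t = exp (v * t ^ 2 / 2) := by
  rw [mgf_gaussianReal (map_eval v i)]; simp

lemma integrable_exp_mul_eval (v : ℝ≥0) (i : Fin d) (t : ℝ) :
    Integrable (fun z ↦ exp (t * z i)) (stdGaussianE d v) := by
  have h := integrable_exp_mul_gaussianReal (μ := 0) (v := v) t
  rw [← map_eval v i] at h
  exact (integrable_map_measure h.1 (by fun_prop)).mp h

lemma integrable_exp_mul_norm (v c : ℝ) :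
    Integrable (fun z : EuclideanSpace ℝ (Fin d) ↦ exp (c * ‖z‖)) (stdGaussianE d v) := by
  rw [stdGaussianE, integrable_map_equiv]
  refine (Integrable.fintype_prod (f := fun _ x ↦ exp (c * x) + exp (-(c * x)))
    fun _ ↦ (integrable_exp_mul_gaussianReal c).add (integrable_exp_mul_gaussianReal (-c)) |>.congr
      (ae_of_all _ fun x ↦ by simp [neg_mul])).mono' (by fun_prop) (ae_of_all _ fun x ↦ ?_)
  rw [Function.comp_apply, Real.norm_eq_abs, abs_of_pos (exp_pos _)]
  calc exp (c * ‖WithLp.toLp 2 x‖) ≤ exp (∑ i, |c * x i|) := by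
        gcongr
        calc c * ‖WithLp.toLp 2 x‖ ≤ |c| * ‖WithLp.toLp 2 x‖ := by gcongr; exact le_abs_self c
          _ ≤ |c| * ∑ i, |x i| := by gcongr; exact EuclideanSpace.norm_le_sum_abs _
          _ = ∑ i, |c * x i| := by simp_rw [Finset.mul_sum, abs_mul]
    _ = ∏ i, exp |c * x i| := exp_sum _ _
    _ ≤ ∏ i, (exp (c * x i) + exp (-(c * x i))) :=
        Finset.prod_le_prod (fun _ _ ↦ (exp_pos _).le) fun _ _ ↦ exp_abs_le_exp_add_exp_neg _

lemma map_const_smul (v : ℝ≥0) (c : ℝ) :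
    (stdGaussianE d v).map (c • ·) = stdGaussianE d (c ^ 2 * v) := by
  set w : ℝ≥0 := .mk (c ^ 2) (sq_nonneg _) * v
  have hmp : MeasurePreserving (fun x : Fin d → ℝ ↦ c • x)
      (Measure.pi fun _ ↦ gaussianReal 0 v) (Measure.pi fun _ ↦ gaussianReal 0 w) := by
    refine measurePreserving_pi (f := fun _ (x : ℝ) ↦ c * x) _ _ fun _ ↦ ⟨by fun_prop, ?_⟩
    rw [gaussianReal_map_const_mul, mul_zero]
  rw [show c ^ 2 * (v : ℝ) = w by simp [w], stdGaussianE, stdGaussianE, toNNReal_coe,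
    toNNReal_coe, Measure.map_map (by fun_prop) (by fun_prop), ← hmp.map_eq,
    Measure.map_map (by fun_prop) (by fun_prop)]
  rfl

lemma integrable_cosh_mul_sub_eval (v : ℝ≥0) (i : Fin d) (c : ℝ) :
    Integrable (fun p : EuclideanSpace ℝ (Fin d) × EuclideanSpace ℝ (Fin d) ↦
      cosh (c * (p.1 i - p.2 i))) ((stdGaussianE d v).prod (stdGaussianE d v)) :=
  integrable_cosh_mul_sub (F := fun z : EuclideanSpace ℝ (Fin d) ↦ z i)
    (integrable_exp_mul_eval v i c) (integrable_exp_mul_eval v i (-c))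

lemma integral_cosh_mul_sub_eval (v : ℝ≥0) (i : Fin d) (c : ℝ) :
    ∫ p, cosh (c * (p.1 i - p.2 i)) ∂((stdGaussianE d v).prod (stdGaussianE d v))
      = exp (v * c ^ 2) := by
  refine (integral_cosh_mul_sub (F := fun z : EuclideanSpace ℝ (Fin d) ↦ z i)
    (integrable_exp_mul_eval v i c) (integrable_exp_mul_eval v i (-c))).trans ?_
  rw [mgf_eval, mgf_eval, ← exp_add]
  ring_nf

end stdGaussianE

section Lipschitz

variable {d : ℕ} {f : EuclideanSpace ℝ (Fin d) → ℝ} {L : ℝ≥0}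

lemma LipschitzWith.integrable_exp_mul_stdGaussianE (hf : LipschitzWith L f) (v t : ℝ) :
    Integrable (fun z ↦ exp (t * f z)) (stdGaussianE d v) := by
  refine ((stdGaussianE.integrable_exp_mul_norm v (|t| * L)).const_mul (exp (|t| * |f 0|))).mono'
    (hf.continuous.measurable.const_mul t).exp.aestronglyMeasurable (ae_of_all _ fun z ↦ ?_)
  have hfz : |f z| ≤ |f 0| + L * ‖z‖ := by
    have := hf.dist_le_mul z 0
    rw [Real.dist_eq, dist_zero_right] at this
    linarith [abs_sub_abs_le_abs_sub (f z) (f 0)]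
  rw [Real.norm_eq_abs, abs_of_pos (exp_pos _), ← exp_add]
  gcongr
  calc t * f z ≤ |t| * |f z| := by rw [← abs_mul]; exact le_abs_self _
    _ ≤ |t| * (|f 0| + L * ‖z‖) := by gcongr
    _ = _ := by ring

lemma LipschitzWith.cosh_mul_sub_le (hf : LipschitzWith L f) (t : ℝ)
    (x y : EuclideanSpace ℝ (Fin d)) :
    cosh (t * (f x - f y)) ≤ 1 + ∑ i, (cosh (|t| * L * √d * (x i - y i)) - 1) := by
  have hlip : |t * (f x - f y)| ≤ |(|t| * L * ‖x - y‖)| := by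
    rw [abs_mul, abs_of_nonneg (by positivity : 0 ≤ |t| * L * ‖x - y‖), mul_assoc]
    gcongr
    simpa [Real.dist_eq, dist_eq_norm] using hf.dist_le_mul x y
  simpa using (cosh_le_cosh.mpr hlip).trans
    (cosh_mul_norm_le (x - y) (by positivity : 0 ≤ |t| * L))

lemma LipschitzWith.hasSubgaussianMGF_stdGaussianE (hf : LipschitzWith L f) (v : ℝ≥0) :
    HasSubgaussianMGF (fun z ↦ f z - ∫ w, f w ∂(stdGaussianE d v)) (2 * d ^ 2 * L ^ 2 * v)
      (stdGaussianE d v) where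
  integrable_exp_mul t := by
    simp_rw [mul_sub, sub_eq_add_neg, exp_add]
    exact (hf.integrable_exp_mul_stdGaussianE v t).mul_const _
  mgf_le t := by
    set γ := stdGaussianE d v
    set c := |t| * L * √d
    have hterm : ∀ i, Integrable (fun p : EuclideanSpace ℝ (Fin d) × EuclideanSpace ℝ (Fin d) ↦
        cosh (c * (p.1 i - p.2 i)) - 1) (γ.prod γ) :=
      fun i ↦ (stdGaussianE.integrable_cosh_mul_sub_eval v i c).sub (integrable_const 1)
    have hterm_integral : ∀ i, ∫ p, (cosh (c * (p.1 i - p.2 i)) - 1) ∂(γ.prod γ)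
        = exp (v * c ^ 2) - 1 := fun i ↦ by
      rw [integral_sub (stdGaussianE.integrable_cosh_mul_sub_eval v i c) (integrable_const 1),
        stdGaussianE.integral_cosh_mul_sub_eval]
      simp
    calc mgf (fun z ↦ f z - ∫ w, f w ∂γ) γ t
        ≤ mgf f γ t * mgf f γ (-t) :=
          mgf_sub_integral_le_mgf_mul_mgf (hf.integrable_exp_mul_stdGaussianE v) t
      _ = ∫ p, cosh (t * (f p.1 - f p.2)) ∂(γ.prod γ) :=
          (integral_cosh_mul_sub (hf.integrable_exp_mul_stdGaussianE v t)
            (hf.integrable_exp_mul_stdGaussianE v (-t))).symm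
      _ ≤ ∫ p, (1 + ∑ i, (cosh (c * (p.1 i - p.2 i)) - 1)) ∂(γ.prod γ) :=
          integral_mono_of_nonneg (ae_of_all _ fun _ ↦ (cosh_pos _).le)
            ((integrable_const 1).add (integrable_finsetSum _ fun i _ ↦ hterm i))
            (ae_of_all _ fun p ↦ hf.cosh_mul_sub_le t p.1 p.2)
      _ = 1 + d * (exp (v * c ^ 2) - 1) := by
          rw [integral_add (integrable_const 1) (integrable_finsetSum _ fun i _ ↦ hterm i),
            integral_finsetSum _ fun i _ ↦ hterm i]
          simp only [integral_const, probReal_univ, smul_eq_mul, mul_one, hterm_integral,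
            Finset.sum_const, Finset.card_univ, Fintype.card_fin, nsmul_eq_mul]
      _ ≤ exp (v * c ^ 2) ^ d := by
          simpa using one_add_mul_le_pow (a := exp (v * c ^ 2) - 1)
            (by linarith [exp_pos (v * c ^ 2)]) d
      _ = exp ((2 * d ^ 2 * L ^ 2 * v : ℝ≥0) * t ^ 2 / 2) := by
          rw [← exp_nat_mul]; congr 1; simp only [c]; push_cast
          rw [mul_pow, mul_pow, sq_abs, sq_sqrt (Nat.cast_nonneg _)]; ring

end Lipschitz

lemma heatSol_eq_smul_sum_map {d N : ℕ} (y : Fin N → EuclideanSpace ℝ (Fin d))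
    (α : EuclideanSpace ℝ (Fin d)) (h : ℝ) :
    heatSol y α h
      = (N : ℝ≥0∞)⁻¹ • ∑ k, (stdGaussianE d (2 * h)).map (fun w ↦ y k + h • α + w) := by
  rw [heatSol, emp, Measure.prod_smul_left, ← Measure.sum_fintype, Measure.prod_sum_left,
    Measure.map_smul, Measure.map_sum (by fun_prop), Measure.sum_fintype]
  congr; ext1 k
  rw [Measure.dirac_prod, Measure.map_map (by fun_prop) (by fun_prop)]
  rfl

lemma LipschitzWith.integral_heatSol {d N : ℕ} {φ : EuclideanSpace ℝ (Fin d) → ℝ} {L : ℝ≥0}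
    (hφ : LipschitzWith L φ) (y : Fin N → EuclideanSpace ℝ (Fin d))
    (α : EuclideanSpace ℝ (Fin d)) (h : ℝ) :
    ∫ z, φ z ∂(heatSol y α h)
      = (N : ℝ)⁻¹ * ∑ k, ∫ w, φ (y k + h • α + w) ∂(stdGaussianE d (2 * h)) := by
  have hint : ∀ k, Integrable φ ((stdGaussianE d (2 * h)).map (fun w ↦ y k + h • α + w)) :=
    fun k ↦ by
      rw [integrable_map_measure hφ.continuous.aestronglyMeasurable (by fun_prop)]
      exact integrable_of_forall_integrable_exp_mul
        ((hφ.comp (isometry_add_left _).lipschitz).integrable_exp_mul_stdGaussianE _)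
  rw [heatSol_eq_smul_sum_map, integral_smul_measure, integral_finsetSum_measure fun k _ ↦ hint k,
    ENNReal.toReal_inv, ENNReal.toReal_natCast, smul_eq_mul]
  congr 1
  refine Finset.sum_congr rfl fun k _ ↦ ?_
  rw [integral_map (by fun_prop) hφ.continuous.aestronglyMeasurable]

lemma LipschitzWith.hasSubgaussianMGF_integral_sub_sqrt_two_smul {d : ℕ}
    {φ : EuclideanSpace ℝ (Fin d) → ℝ} {L : ℝ≥0} (hφ : LipschitzWith L φ)
    (a : EuclideanSpace ℝ (Fin d)) (v : ℝ≥0) :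
    HasSubgaussianMGF (fun z ↦ (∫ w, φ (a + w) ∂(stdGaussianE d (2 * v))) - φ (a + √2 • z))
      (4 * d ^ 2 * L ^ 2 * v) (stdGaussianE d v) := by
  have hlip : LipschitzWith (L * ‖(√2 : ℝ)‖₊) (fun z ↦ φ (a + √2 • z)) := by
    have := hφ.comp ((isometry_add_left a).lipschitz.comp (lipschitzWith_smul (√2 : ℝ)))
    rwa [one_mul] at this
  have hmean : ∫ z, φ (a + √2 • z) ∂(stdGaussianE d v)
      = ∫ w, φ (a + w) ∂(stdGaussianE d (2 * v)) := by
    have hscale : stdGaussianE d (2 * v) = (stdGaussianE d v).map (√2 • ·) := by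
      rw [stdGaussianE.map_const_smul, sq_sqrt zero_le_two]
    rw [hscale, integral_map (f := fun w ↦ φ (a + w)) (by fun_prop)
      (hφ.continuous.comp (continuous_const_add a)).aestronglyMeasurable]
  have hconst : 2 * d ^ 2 * (L * ‖(√2 : ℝ)‖₊) ^ 2 * v = 4 * d ^ 2 * L ^ 2 * v := by
    ext; push_cast; rw [mul_pow, Real.norm_eq_abs, sq_abs, sq_sqrt zero_le_two]; ring
  have := (hlip.hasSubgaussianMGF_stdGaussianE v).neg
  rw [hconst, hmean] at this
  exact this.congr (ae_of_all _ fun z ↦ by simp)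

/-- Tail estimate for the deviation of the empirical measure of independent drifted
Brownian particles from the solution of the drift-heat equation, tested against a
1-Lipschitz function: `ℙ[∫φ d(m(h) − m^N_{Y_h}) > x] ≤ exp(−N x²/(C h))` with `C`
depending only on `d`. -/
theorem tail_bound_lipschitz_test (d : ℕ) (hd : 0 < d) :
    ∃ C : ℝ, 0 < C ∧
      ∀ (α : EuclideanSpace ℝ (Fin d)) (N : ℕ), 1 ≤ N →
        ∀ (y0 : Fin N → EuclideanSpace ℝ (Fin d))
          (Ω : Type) (mΩ : MeasurableSpace Ω) (P : Measure Ω),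
          IsProbabilityMeasure P →
          ∀ B : Fin N → ℝ → Ω → EuclideanSpace ℝ (Fin d),
            (∀ k t, Measurable (B k t)) →
            (∀ t : ℝ, 0 ≤ t → iIndepFun (fun k => B k t) P) →
            (∀ (k) (t : ℝ), 0 ≤ t → Measure.map (B k t) P = stdGaussianE d t) →
            ∀ φ : EuclideanSpace ℝ (Fin d) → ℝ, LipschitzWith 1 φ →
              ∀ h : ℝ, 0 < h → ∀ x : ℝ, 0 < x →
                P {ω | x < (∫ z, φ z ∂(heatSol y0 α h)) -
                    (1 / N : ℝ) * ∑ k, φ (y0 k + h • α + Real.sqrt 2 • B k h ω)}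
                  ≤ ENNReal.ofReal (Real.exp (-(N * x ^ 2) / (C * h))) := by
  refine ⟨8 * d ^ 2, by positivity, ?_⟩
  intro α N hN y0 Ω _ P hP B hB_meas hB_indep hB_law φ hφ h hh x hx
  lift h to ℝ≥0 using hh.le
  set G : Fin N → EuclideanSpace ℝ (Fin d) → ℝ := fun k z ↦
    (∫ w, φ (y0 k + (h : ℝ) • α + w) ∂(stdGaussianE d (2 * h))) - φ (y0 k + (h : ℝ) • α + √2 • z)
  set X : Fin N → Ω → ℝ := fun k ↦ G k ∘ B k h
  have hX : ∀ k ∈ Finset.univ, HasSubgaussianMGF (X k) (4 * d ^ 2 * h) P := fun k _ ↦ by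
    have := hφ.hasSubgaussianMGF_integral_sub_sqrt_two_smul (y0 k + (h : ℝ) • α) h
    rw [← hB_law k h h.2, one_pow, mul_one] at this
    exact this.of_map (hB_meas k h).aemeasurable
  have hX_indep : iIndepFun X P :=
    (hB_indep h h.2).comp G fun k ↦
      measurable_const.sub (hφ.continuous.comp (by fun_prop)).measurable
  have hdev : ∀ ω, (∫ z, φ z ∂(heatSol y0 α h)) -
      (1 / N : ℝ) * ∑ k, φ (y0 k + (h : ℝ) • α + √2 • B k h ω) = (N : ℝ)⁻¹ * ∑ k, X k ω := by
    intro ω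
    simp only [hφ.integral_heatSol, one_div, Function.comp_apply, Finset.sum_sub_distrib, X, G]
    ring
  have hNpos : (0 : ℝ) < N := by exact_mod_cast hN
  calc P {ω | x < (∫ z, φ z ∂(heatSol y0 α h)) -
        (1 / N : ℝ) * ∑ k, φ (y0 k + (h : ℝ) • α + √2 • B k h ω)}
      ≤ P {ω | N * x ≤ ∑ k, X k ω} := measure_mono fun ω hω ↦ by
        simp only [mem_ofPred_eq, hdev] at hω ⊢
        rw [inv_mul_eq_div, lt_div_iff₀' hNpos] at hω
        exact hω.le
    _ = ENNReal.ofReal (P.real {ω | N * x ≤ ∑ k, X k ω}) := (ofReal_measureReal).symm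
    _ ≤ ENNReal.ofReal (Real.exp (-(N * x ^ 2) / (8 * d ^ 2 * h))) := by
        refine ENNReal.ofReal_le_ofReal ((HasSubgaussianMGF.measure_sum_ge_le_of_iIndepFun
          hX_indep hX (by positivity)).trans_eq ?_)
        congr 1
        simp only [Finset.sum_const, Finset.card_univ, Fintype.card_fin, nsmul_eq_mul,
          NNReal.coe_mul, NNReal.coe_natCast, NNReal.coe_ofNat, coe_pow]
        field_simp
        ring
end

section
/- Let w : [0,T] × (ℝ^d)^N → ℝ be a convex function satisfying 0 ≤ w(t, x) ≤ (1/(θN))∑_{k=1}^N |x^k − x_0^k|² + (1/θ)(t − t_0)² for all (t,x), where (t_0, x_0) is fixed and θ > 0. Then for all (t,x), (θN/4)∑_{k=1}^N |D_{x^k} w(t,x)|² + (θ/4)|∂_t w(t,x)|² ≤ ∑_{k=1}^N D_{x^k}w(t,x)·(x^k − x_0^k) + ∂_t w(t,x)(t − t_0). -/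
open scoped RealInnerProductSpace

/-- For a C¹ convex function `w` on `[0,T] × (ℝ^d)^N` (convexity encoded by the gradient
inequality, with spatial gradients `wx` and time derivative `wt`) squeezed between `0`
and the quadratic `(1/(θN))∑|x^k − x₀^k|² + (1/θ)(t − t₀)²`, one has
`(θN/4)∑|D_{x^k}w|² + (θ/4)|∂_t w|² ≤ ∑ D_{x^k}w·(x^k − x₀^k) + ∂_t w·(t − t₀)`. -/
theorem convex_pinched_gradient_bound
    (d N : ℕ) (hN : 0 < N) (θ : ℝ) (hθ : 0 < θ)
    (t0 : ℝ) (x0 : Fin N → EuclideanSpace ℝ (Fin d))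
    (w wt : ℝ → (Fin N → EuclideanSpace ℝ (Fin d)) → ℝ)
    (wx : ℝ → (Fin N → EuclideanSpace ℝ (Fin d)) → Fin N → EuclideanSpace ℝ (Fin d))
    (hconv : ∀ (t : ℝ) (x : Fin N → EuclideanSpace ℝ (Fin d))
        (s : ℝ) (y : Fin N → EuclideanSpace ℝ (Fin d)),
      w t x + (∑ k, ⟪wx t x k, y k - x k⟫) + wt t x * (s - t) ≤ w s y)
    (hlow : ∀ t x, 0 ≤ w t x)
    (hup : ∀ t x, w t x ≤ (1 / (θ * N)) * ∑ k, ‖x k - x0 k‖ ^ 2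
      + (1 / θ) * (t - t0) ^ 2) :
    ∀ (t : ℝ) (x : Fin N → EuclideanSpace ℝ (Fin d)),
      (θ * N / 4) * ∑ k, ‖wx t x k‖ ^ 2 + (θ / 4) * |wt t x| ^ 2
        ≤ (∑ k, ⟪wx t x k, x k - x0 k⟫) + wt t x * (t - t0) := by
  intro t x
  set s : ℝ := t0 + (θ / 2) * wt t x with hs
  set y : Fin N → EuclideanSpace ℝ (Fin d) :=
    fun k => x0 k + (θ * N / 2) • wx t x k with hy
  have hNR : (0:ℝ) < (N:ℝ) := by exact_mod_cast hN
  have h1 := hconv t x s y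
  have h2 := hup s y
  have h3 := hlow t x
  have hyk : ∀ k, ‖y k - x0 k‖ ^ 2 = (θ * N / 2) ^ 2 * ‖wx t x k‖ ^ 2 := by
    intro k
    simp only [hy, add_sub_cancel_left, norm_smul, mul_pow, Real.norm_eq_abs, sq_abs]
  have hinner : ∀ k, ⟪wx t x k, y k - x k⟫
      = ⟪wx t x k, x0 k - x k⟫ + (θ * N / 2) * ‖wx t x k‖ ^ 2 := by
    intro k
    have : y k - x k = (x0 k - x k) + (θ * N / 2) • wx t x k := by
      simp only [hy]; abel
    rw [this, inner_add_right, real_inner_smul_right, real_inner_self_eq_norm_sq]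
  have hinner' : ∀ k, ⟪wx t x k, x0 k - x k⟫ = - ⟪wx t x k, x k - x0 k⟫ := by
    intro k
    rw [← inner_neg_right, neg_sub]
  -- rewrite h2
  have h2' : w s y ≤ (θ * N / 4) * ∑ k, ‖wx t x k‖ ^ 2 + (θ / 4) * (wt t x) ^ 2 := by
    have e1 : (1 / (θ * N)) * ∑ k, ‖y k - x0 k‖ ^ 2
        = (θ * N / 4) * ∑ k, ‖wx t x k‖ ^ 2 := by
      rw [Finset.sum_congr rfl (fun k _ => hyk k), ← Finset.mul_sum, ← mul_assoc]
      congr 1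
      field_simp
      ring
    have e2 : (1 / θ) * (s - t0) ^ 2 = (θ / 4) * (wt t x) ^ 2 := by
      simp only [hs, add_sub_cancel_left]
      field_simp
      ring
    calc w s y ≤ _ := h2
      _ = _ := by rw [e1, e2]
  have hsum : (∑ k, ⟪wx t x k, y k - x k⟫)
      = -(∑ k, ⟪wx t x k, x k - x0 k⟫) + (θ * N / 2) * ∑ k, ‖wx t x k‖ ^ 2 := by
    rw [Finset.sum_congr rfl (fun k _ => by rw [hinner k, hinner' k])]
    rw [Finset.sum_add_distrib, ← Finset.sum_neg_distrib, Finset.mul_sum]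
  have hst : wt t x * (s - t) = wt t x * (t0 - t) + (θ / 2) * (wt t x) ^ 2 := by
    simp only [hs]; ring
  rw [hsum, hst] at h1
  have habs : |wt t x| ^ 2 = (wt t x) ^ 2 := sq_abs _
  rw [habs]
  nlinarith [h1, h2', h3]
end

section
/- Let V : [0,T] × (ℝ^d)^N → ℝ be C¹ and semiconcave in the sense that for all ξ = (ξ^1,...,ξ^N) ∈ (ℝ^d)^N and ξ^0 ∈ ℝ, the second-order quadratic form of V satisfies ∑_{i,j} D²_{x^i x^j}V ξ^i·ξ^j + 2∑_i D²_{x^i t}V·ξ^i ξ^0 + D²_{tt}V (ξ^0)² ≤ (C/N)∑_i |ξ^i|² + C(ξ^0)². Suppose |D_{x^k}V| ≤ C/N and |∂_t V| ≤ C for all k. Let (t_0, x_0) maximize (t,x) ↦ −V(t,x) − (1/(2θN))∑_k |x^k − y_0^k|² − (1/(2θ))(t − s_0)² for fixed (s_0, y_0) and 0 < θ ≤ 1/(2C). Then for any (t,x), ∑_{k=1}^N |D_{x^k}V(t,x) − D_{x^k}V(t_0,x_0)| ≤ (C'/N)∑_k |x^k − x_0^k| + (C'/(Nθ) ∑_k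 (|x^k − x_0^k| + |x^k − x_0^k|²))^{1/2} + (C'/θ^{1/2})|t − t_0|^{1/2}, with C' depending only on C. -/
open scoped RealInnerProductSpace

private lemma aux_sqrt_add {x y : ℝ} (hx : 0 ≤ x) (hy : 0 ≤ y) :
    Real.sqrt (x + y) ≤ Real.sqrt x + Real.sqrt y := by
  have h1 := Real.sq_sqrt hx
  have h2 := Real.sq_sqrt hy
  have h3 := Real.sqrt_nonneg x
  have h4 := Real.sqrt_nonneg y
  have h5 : x + y ≤ (Real.sqrt x + Real.sqrt y) ^ 2 := by nlinarith
  calc Real.sqrt (x + y) ≤ Real.sqrt ((Real.sqrt x + Real.sqrt y) ^ 2) := Real.sqrt_le_sqrt h5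
    _ = Real.sqrt x + Real.sqrt y := Real.sqrt_sq (by positivity)

private lemma aux_opt {K D L : ℝ} (hK : 0 < K) (hD : 0 ≤ D)
    (h : ∀ l : ℝ, 0 < l → L * l ≤ D + K * l ^ 2) : L ≤ 2 * Real.sqrt (K * D) := by
  rcases eq_or_lt_of_le hD with hD0 | hD0
  · have hL : L ≤ 0 := by
      by_contra hL
      push_neg at hL
      have h' := h (L / (2 * K)) (by positivity)
      rw [← hD0] at h'
      have hl0 : 0 < L / (2 * K) := div_pos hL (by positivity)
      have e : L * (L / (2 * K)) = 2 * K * (L / (2 * K)) ^ 2 := by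
        field_simp
      nlinarith [mul_pos hK (mul_pos hl0 hl0)]
    have := Real.sqrt_nonneg (K * D)
    linarith
  · have hDK : 0 < D / K := div_pos hD0 hK
    set l := Real.sqrt (D / K) with hl
    have hlpos : 0 < l := Real.sqrt_pos.mpr hDK
    have hlsq : l ^ 2 = D / K := Real.sq_sqrt hDK.le
    have h' := h l hlpos
    have hKl : K * l ^ 2 = D := by rw [hlsq]; field_simp
    have hsl : Real.sqrt (K * D) * l = D := by
      rw [hl, ← Real.sqrt_mul (by positivity : (0:ℝ) ≤ K * D)]
      rw [show K * D * (D / K) = D ^ 2 by field_simp]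
      exact Real.sqrt_sq hD
    have h2 : L * l ≤ 2 * Real.sqrt (K * D) * l := by
      rw [mul_assoc, hsl]
      linarith
    exact le_of_mul_le_mul_right h2 hlpos

set_option maxHeartbeats 4000000 in
/-- For a C¹, uniformly Lipschitz and semiconcave function `V` on `[0,T] × (ℝ^d)^N`
(semiconcavity with constants `C/N` in space and `C` in time, gradients `Vx`, `Vt`),
if `(t₀,x₀)` maximizes `(t,x) ↦ −V(t,x) − (1/(2θN))∑|x^k−y₀^k|² − (1/(2θ))(t−s₀)²`
with `0 < θ ≤ 1/(2C)`, then for all `(t,x)`,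
`∑_k |D_{x^k}V(t,x) − D_{x^k}V(t₀,x₀)|` is bounded by
`(C'/N)∑|x^k−x₀^k| + (C'/(Nθ)∑(|x^k−x₀^k|+|x^k−x₀^k|²))^{1/2} + (C'/θ^{1/2})|t−t₀|^{1/2}`
with `C'` depending only on `C`. -/
theorem semiconcave_gradient_estimate (C : ℝ) (hC : 0 < C) :
    ∃ C' : ℝ, 0 < C' ∧
      ∀ (d N : ℕ), 0 < N →
      ∀ (V Vt : ℝ → (Fin N → EuclideanSpace ℝ (Fin d)) → ℝ)
        (Vx : ℝ → (Fin N → EuclideanSpace ℝ (Fin d)) → Fin N → EuclideanSpace ℝ (Fin d))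
        (θ s0 t0 : ℝ) (y0 x0 : Fin N → EuclideanSpace ℝ (Fin d)),
        0 < θ → θ ≤ 1 / (2 * C) →
        -- semiconcavity: second-order upper bound with constants C/N and C
        (∀ (t : ℝ) (x : Fin N → EuclideanSpace ℝ (Fin d))
            (s : ℝ) (y : Fin N → EuclideanSpace ℝ (Fin d)),
          V s y - V t x - (∑ k, ⟪Vx t x k, y k - x k⟫) - Vt t x * (s - t)
            ≤ (C / N) * ∑ k, ‖y k - x k‖ ^ 2 + C * (s - t) ^ 2) →
        -- uniform gradient bounds
        (∀ t x k, ‖Vx t x k‖ ≤ C / N) →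
        (∀ t x, |Vt t x| ≤ C) →
        -- (t₀, x₀) maximizes the penalized functional
        (∀ (t : ℝ) (x : Fin N → EuclideanSpace ℝ (Fin d)),
          -V t x - (1 / (2 * θ * N)) * ∑ k, ‖x k - y0 k‖ ^ 2
              - (1 / (2 * θ)) * (t - s0) ^ 2
            ≤ -V t0 x0 - (1 / (2 * θ * N)) * ∑ k, ‖x0 k - y0 k‖ ^ 2
              - (1 / (2 * θ)) * (t0 - s0) ^ 2) →
        ∀ (t : ℝ) (x : Fin N → EuclideanSpace ℝ (Fin d)),
          ∑ k, ‖Vx t x k - Vx t0 x0 k‖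
            ≤ (C' / N) * (∑ k, ‖x k - x0 k‖)
              + Real.sqrt ((C' / (N * θ)) * ∑ k, (‖x k - x0 k‖ + ‖x k - x0 k‖ ^ 2))
              + (C' / Real.sqrt θ) * Real.sqrt |t - t0| := by
  refine ⟨36 * C + 12, by positivity, ?_⟩
  intro d N hN V Vt Vx θ s0 t0 y0 x0 hθ hθC hsc hVx hVt hmax
  have hNR : (0:ℝ) < (N:ℝ) := by exact_mod_cast hN
  have hNR1 : (1:ℝ) ≤ (N:ℝ) := by exact_mod_cast hN
  have hθne : θ ≠ 0 := ne_of_gt hθ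
  have hNne : (N:ℝ) ≠ 0 := ne_of_gt hNR
  have h2C : (0:ℝ) < 2 * C := by linarith
  have hθC' : 2 * C * θ ≤ 1 := by
    have h := mul_le_mul_of_nonneg_left hθC h2C.le
    calc 2 * C * θ ≤ 2 * C * (1 / (2 * C)) := h
      _ = 1 := by field_simp
  have h2C1θ : 2 * C ≤ 1 / θ := by
    rw [le_div_iff₀ hθ]
    linarith
  -- the candidate gradient at (t0,x0), coming from the penalization
  set p : Fin N → EuclideanSpace ℝ (Fin d) := fun k => (θ * (N:ℝ))⁻¹ • (y0 k - x0 k) with hp_def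
  set ρ : ℝ := (s0 - t0) / θ with hρ_def
  have hiden : ∀ (y : Fin N → EuclideanSpace ℝ (Fin d)) (k : Fin N),
      ‖y k - y0 k‖ ^ 2
        = ‖y k - x0 k‖ ^ 2 - (2 * θ * (N:ℝ)) * ⟪p k, y k - x0 k⟫ + ‖x0 k - y0 k‖ ^ 2 := by
    intro y k
    have h1 : y k - y0 k = (y k - x0 k) + (x0 k - y0 k) := by abel
    rw [h1, norm_add_sq_real]
    have h2 : ⟪p k, y k - x0 k⟫ = (θ * (N:ℝ))⁻¹ * ⟪y0 k - x0 k, y k - x0 k⟫ := by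
      rw [hp_def]
      exact real_inner_smul_left _ _ _
    have h3 : ⟪y k - x0 k, x0 k - y0 k⟫ = -⟪y0 k - x0 k, y k - x0 k⟫ := by
      rw [real_inner_comm, show x0 k - y0 k = -(y0 k - x0 k) by abel, inner_neg_left]
    rw [h3, h2]
    field_simp
    ring
  have hsum_iden : ∀ (y : Fin N → EuclideanSpace ℝ (Fin d)),
      ∑ k, ‖y k - y0 k‖ ^ 2
        = ∑ k, ‖y k - x0 k‖ ^ 2 - (2 * θ * (N:ℝ)) * ∑ k, ⟪p k, y k - x0 k⟫
          + ∑ k, ‖x0 k - y0 k‖ ^ 2 := by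
    intro y
    rw [Finset.mul_sum, ← Finset.sum_sub_distrib, ← Finset.sum_add_distrib]
    exact Finset.sum_congr rfl fun k _ => hiden y k
  -- lower bound coming from the maximality of (t0,x0)
  have hlow0 : ∀ (s : ℝ) (y : Fin N → EuclideanSpace ℝ (Fin d)),
      V t0 x0 - V s y
        ≤ (1 / (2 * θ * (N:ℝ))) * ∑ k, ‖y k - x0 k‖ ^ 2 - ∑ k, ⟪p k, y k - x0 k⟫
          + ((1 / (2 * θ)) * (s - t0) ^ 2 - ρ * (s - t0)) := by
    intro s y
    have h1 := hmax s y
    have g2 : (1 / (2 * θ * (N:ℝ))) * ∑ k, ‖y k - y0 k‖ ^ 2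
        = (1 / (2 * θ * (N:ℝ))) * ∑ k, ‖y k - x0 k‖ ^ 2 - ∑ k, ⟪p k, y k - x0 k⟫
          + (1 / (2 * θ * (N:ℝ))) * ∑ k, ‖x0 k - y0 k‖ ^ 2 := by
      rw [hsum_iden y]
      field_simp
    have e2 : (1 / (2 * θ)) * (s - s0) ^ 2 - (1 / (2 * θ)) * (t0 - s0) ^ 2
        = (1 / (2 * θ)) * (s - t0) ^ 2 - ρ * (s - t0) := by
      rw [hρ_def]
      field_simp
      ring
    linarith [h1, g2, e2]
  -- Step A : identify the gradient at (t0,x0)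
  have hcomb : ∀ (s : ℝ) (y : Fin N → EuclideanSpace ℝ (Fin d)),
      (∑ k, ⟪p k - Vx t0 x0 k, y k - x0 k⟫) + (ρ - Vt t0 x0) * (s - t0)
        ≤ (C + 1 / (2 * θ)) * (∑ k, ‖y k - x0 k‖ ^ 2) + (C + 1 / (2 * θ)) * (s - t0) ^ 2 := by
    intro s y
    have h1 := hsc t0 x0 s y
    have h2 := hlow0 s y
    have hSnn : (0:ℝ) ≤ ∑ k, ‖y k - x0 k‖ ^ 2 := Finset.sum_nonneg fun k _ => sq_nonneg _
    have h3 : ∑ k, ⟪p k - Vx t0 x0 k, y k - x0 k⟫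
        = ∑ k, ⟪p k, y k - x0 k⟫ - ∑ k, ⟪Vx t0 x0 k, y k - x0 k⟫ := by
      rw [← Finset.sum_sub_distrib]
      exact Finset.sum_congr rfl fun k _ => by rw [inner_sub_left]
    have h4 : (C / (N:ℝ)) * ∑ k, ‖y k - x0 k‖ ^ 2 ≤ C * ∑ k, ‖y k - x0 k‖ ^ 2 :=
      mul_le_mul_of_nonneg_right (div_le_self hC.le hNR1) hSnn
    have h5 : (1 / (2 * θ * (N:ℝ))) * ∑ k, ‖y k - x0 k‖ ^ 2
        ≤ (1 / (2 * θ)) * ∑ k, ‖y k - x0 k‖ ^ 2 := by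
      apply mul_le_mul_of_nonneg_right _ hSnn
      apply div_le_div_of_nonneg_left (by norm_num) (by positivity)
      nlinarith
    have h6 : (ρ - Vt t0 x0) * (s - t0) = ρ * (s - t0) - Vt t0 x0 * (s - t0) := by ring
    have h7 : (C + 1 / (2 * θ)) * (s - t0) ^ 2
        = C * (s - t0) ^ 2 + (1 / (2 * θ)) * (s - t0) ^ 2 := by ring
    have h8 : (C + 1 / (2 * θ)) * (∑ k, ‖y k - x0 k‖ ^ 2)
        = C * (∑ k, ‖y k - x0 k‖ ^ 2) + (1 / (2 * θ)) * (∑ k, ‖y k - x0 k‖ ^ 2) := by ring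
    linarith
  have hM : (∑ k, ‖p k - Vx t0 x0 k‖ ^ 2) + (ρ - Vt t0 x0) ^ 2 ≤ 0 := by
    set K0 : ℝ := C + 1 / (2 * θ) with hK0
    have hK0pos : 0 < K0 := by
      rw [hK0]; positivity
    set M : ℝ := (∑ k, ‖p k - Vx t0 x0 k‖ ^ 2) + (ρ - Vt t0 x0) ^ 2 with hM_def
    have hMnn : 0 ≤ M := by
      rw [hM_def]
      exact add_nonneg (Finset.sum_nonneg fun k _ => sq_nonneg _) (sq_nonneg _)
    have hε := hcomb (t0 + (1 / (2 * K0)) * (ρ - Vt t0 x0))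
      (fun k => x0 k + (1 / (2 * K0)) • (p k - Vx t0 x0 k))
    have e1 : ∑ k, ⟪p k - Vx t0 x0 k,
        (fun k => x0 k + (1 / (2 * K0)) • (p k - Vx t0 x0 k)) k - x0 k⟫
        = (1 / (2 * K0)) * ∑ k, ‖p k - Vx t0 x0 k‖ ^ 2 := by
      rw [Finset.mul_sum]
      refine Finset.sum_congr rfl fun k _ => ?_
      simp only [add_sub_cancel_left, real_inner_smul_right, real_inner_self_eq_norm_sq]
    have e2 : ∑ k, ‖(fun k => x0 k + (1 / (2 * K0)) • (p k - Vx t0 x0 k)) k - x0 k‖ ^ 2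
        = (1 / (2 * K0)) ^ 2 * ∑ k, ‖p k - Vx t0 x0 k‖ ^ 2 := by
      rw [Finset.mul_sum]
      refine Finset.sum_congr rfl fun k _ => ?_
      simp only [add_sub_cancel_left, norm_smul, mul_pow, Real.norm_eq_abs, sq_abs]
    have e3 : (t0 + (1 / (2 * K0)) * (ρ - Vt t0 x0)) - t0 = (1 / (2 * K0)) * (ρ - Vt t0 x0) := by
      ring
    rw [e1, e2, e3] at hε
    have e4 : (1 / (2 * K0)) * (∑ k, ‖p k - Vx t0 x0 k‖ ^ 2)
        + (ρ - Vt t0 x0) * ((1 / (2 * K0)) * (ρ - Vt t0 x0)) = (1 / (2 * K0)) * M := by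
      rw [hM_def]; ring
    have e5 : K0 * ((1 / (2 * K0)) ^ 2 * (∑ k, ‖p k - Vx t0 x0 k‖ ^ 2))
        + K0 * ((1 / (2 * K0)) * (ρ - Vt t0 x0)) ^ 2 = (1 / (4 * K0)) * M := by
      rw [hM_def]; field_simp; ring
    have hε' : (1 / (2 * K0)) * M ≤ (1 / (4 * K0)) * M := by nlinarith [hε, e4, e5]
    have e6 : (1 / (2 * K0)) * M * (4 * K0) = 2 * M := by field_simp; ring
    have e7 : (1 / (4 * K0)) * M * (4 * K0) = M := by field_simp
    have e8 := mul_le_mul_of_nonneg_right hε' (by positivity : (0:ℝ) ≤ 4 * K0)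
    rw [e6, e7] at e8
    show M ≤ 0
    linarith
  have hz : ∀ k, Vx t0 x0 k = p k := by
    intro k
    have hs : ∀ j ∈ Finset.univ, (0:ℝ) ≤ ‖p j - Vx t0 x0 j‖ ^ 2 := fun j _ => sq_nonneg _
    have h1 : ‖p k - Vx t0 x0 k‖ ^ 2 ≤ ∑ j, ‖p j - Vx t0 x0 j‖ ^ 2 :=
      Finset.single_le_sum hs (Finset.mem_univ k)
    have h2 : ‖p k - Vx t0 x0 k‖ ^ 2 ≤ 0 := by nlinarith [sq_nonneg (ρ - Vt t0 x0)]
    have h3 : ‖p k - Vx t0 x0 k‖ = 0 := by nlinarith [norm_nonneg (p k - Vx t0 x0 k)]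
    have h4 : p k - Vx t0 x0 k = 0 := norm_eq_zero.mp h3
    exact (sub_eq_zero.mp h4).symm
  have hρeq : Vt t0 x0 = ρ := by
    have h1 : (0:ℝ) ≤ ∑ k, ‖p k - Vx t0 x0 k‖ ^ 2 := Finset.sum_nonneg fun k _ => sq_nonneg _
    have h2 : (ρ - Vt t0 x0) ^ 2 ≤ 0 := by linarith
    have h3 : ρ - Vt t0 x0 = 0 := by nlinarith [sq_nonneg (ρ - Vt t0 x0)]
    linarith [sub_eq_zero.mp h3]
  have hlow : ∀ (s : ℝ) (y : Fin N → EuclideanSpace ℝ (Fin d)),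
      V t0 x0 - V s y
        ≤ (1 / (2 * θ * (N:ℝ))) * ∑ k, ‖y k - x0 k‖ ^ 2 - ∑ k, ⟪Vx t0 x0 k, y k - x0 k⟫
          + ((1 / (2 * θ)) * (s - t0) ^ 2 - Vt t0 x0 * (s - t0)) := by
    intro s y
    simp only [hz, hρeq]
    exact hlow0 s y
  -- main estimate
  intro t x
  set w : Fin N → EuclideanSpace ℝ (Fin d) := fun k => Vx t x k - Vx t0 x0 k with hw_def
  set A1 : ℝ := ∑ k, ‖x k - x0 k‖ with hA1
  set A2 : ℝ := ∑ k, ‖x k - x0 k‖ ^ 2 with hA2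
  set T : ℝ := |t - t0| with hT
  have hA1n : 0 ≤ A1 := Finset.sum_nonneg fun k _ => norm_nonneg _
  have hA2n : 0 ≤ A2 := Finset.sum_nonneg fun k _ => sq_nonneg _
  have hTn : 0 ≤ T := abs_nonneg _
  have hwb : ∀ k, ‖w k‖ ≤ 2 * C / (N:ℝ) := by
    intro k
    calc ‖w k‖ ≤ ‖Vx t x k‖ + ‖Vx t0 x0 k‖ := norm_sub_le _ _
      _ ≤ C / N + C / N := add_le_add (hVx t x k) (hVx t0 x0 k)
      _ = 2 * C / N := by ring
  set L : ℝ := ∑ k, ‖w k‖ with hL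
  have hLn : 0 ≤ L := Finset.sum_nonneg fun k _ => norm_nonneg _
  have hL2C : L ≤ 2 * C := by
    calc L ≤ ∑ _k : Fin N, (2 * C / (N:ℝ)) := Finset.sum_le_sum fun k _ => hwb k
      _ = (N:ℝ) * (2 * C / (N:ℝ)) := by
          rw [Finset.sum_const, Finset.card_fin, nsmul_eq_mul]
      _ = 2 * C := by field_simp
  set K : ℝ := 3 / (2 * θ) with hK
  have hKpos : 0 < K := by rw [hK]; positivity
  set D : ℝ := 2 * C * A1 / (N:ℝ) + 3 * C * A2 / (N:ℝ) + 2 * C * T + 2 * C * T ^ 2 with hD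
  have hDn : 0 ≤ D := by
    have q1 : 0 ≤ 2 * C * A1 / (N:ℝ) := div_nonneg (mul_nonneg (by linarith) hA1n) hNR.le
    have q2 : 0 ≤ 3 * C * A2 / (N:ℝ) := div_nonneg (mul_nonneg (by linarith) hA2n) hNR.le
    have q3 : 0 ≤ 2 * C * T := mul_nonneg (by linarith) hTn
    have q4 : 0 ≤ 2 * C * T ^ 2 := mul_nonneg (by linarith) (sq_nonneg _)
    rw [hD]; linarith
  have hkey : ∀ l : ℝ, 0 < l → L * l ≤ D + K * l ^ 2 := by
    intro l hl
    set u : Fin N → EuclideanSpace ℝ (Fin d) := fun k => ‖w k‖⁻¹ • w k with hu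
    set y : Fin N → EuclideanSpace ℝ (Fin d) := fun k => x0 k - l • u k with hy
    have hun : ∀ k, ‖u k‖ ≤ 1 := by
      intro k
      rw [hu]
      simp only [norm_smul, norm_inv, norm_norm]
      rcases eq_or_ne (w k) 0 with h | h
      · simp [h]
      · rw [inv_mul_cancel₀ (norm_ne_zero_iff.mpr h)]
    have hwu : ∀ k, ⟪w k, u k⟫ = ‖w k‖ := by
      intro k
      rw [hu]
      simp only [real_inner_smul_right, real_inner_self_eq_norm_sq]
      rcases eq_or_ne (w k) 0 with h | h
      · simp [h]
      · rw [sq, inv_mul_cancel_left₀ (norm_ne_zero_iff.mpr h)]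
    have I1 := hsc t x t0 y
    have I2 := hsc t0 x0 t x
    have I3 := hlow t0 y
    have heq : ∀ k, ⟪Vx t0 x0 k, y k - x0 k⟫ - ⟪Vx t0 x0 k, x k - x0 k⟫ - ⟪Vx t x k, y k - x k⟫
        = ⟪w k, x k - x0 k⟫ + l * ‖w k‖ := by
      intro k
      rw [← hwu k]
      have h1 : y k - x0 k = -(l • u k) := by simp only [hy]; abel
      have h2 : y k - x k = -((x k - x0 k) + l • u k) := by simp only [hy]; abel
      rw [h1, h2, hw_def]
      simp only [inner_neg_right, inner_add_right, inner_sub_left, real_inner_smul_right]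
      ring
    have hsum_eq : ∑ k, ⟪Vx t0 x0 k, y k - x0 k⟫ - ∑ k, ⟪Vx t0 x0 k, x k - x0 k⟫
          - ∑ k, ⟪Vx t x k, y k - x k⟫
        = (∑ k, ⟪w k, x k - x0 k⟫) + l * L := by
      rw [hL, Finset.mul_sum, ← Finset.sum_add_distrib, ← Finset.sum_sub_distrib,
        ← Finset.sum_sub_distrib]
      exact Finset.sum_congr rfl fun k _ => heq k
    have hb1 : -(∑ k, ⟪w k, x k - x0 k⟫) ≤ (2 * C / (N:ℝ)) * A1 := by
      rw [hA1, Finset.mul_sum, ← Finset.sum_neg_distrib]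
      apply Finset.sum_le_sum
      intro k _
      have ha := abs_real_inner_le_norm (w k) (x k - x0 k)
      have hb : ‖w k‖ * ‖x k - x0 k‖ ≤ (2 * C / (N:ℝ)) * ‖x k - x0 k‖ :=
        mul_le_mul_of_nonneg_right (hwb k) (norm_nonneg _)
      have hc := neg_abs_le ⟪w k, x k - x0 k⟫
      linarith
    have hb2 : (∑ k, ‖y k - x k‖ ^ 2) ≤ 2 * A2 + 2 * (N:ℝ) * l ^ 2 := by
      have hpt : ∀ k, ‖y k - x k‖ ^ 2 ≤ 2 * ‖x k - x0 k‖ ^ 2 + 2 * l ^ 2 := by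
        intro k
        have h1 : ‖y k - x k‖ ≤ ‖x k - x0 k‖ + l := by
          have e : y k - x k = (x0 k - x k) + (-(l • u k)) := by simp only [hy]; abel
          calc ‖y k - x k‖ = ‖(x0 k - x k) + (-(l • u k))‖ := by rw [e]
            _ ≤ ‖x0 k - x k‖ + ‖-(l • u k)‖ := norm_add_le _ _
            _ = ‖x k - x0 k‖ + ‖l • u k‖ := by rw [norm_sub_rev, norm_neg]
            _ ≤ ‖x k - x0 k‖ + l := by
                have h2 : ‖l • u k‖ = |l| * ‖u k‖ := by rw [norm_smul, Real.norm_eq_abs]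
                rw [h2, abs_of_pos hl]
                have h3 := mul_le_mul_of_nonneg_left (hun k) hl.le
                linarith
        nlinarith [mul_self_le_mul_self (norm_nonneg (y k - x k)) h1,
          sq_nonneg (‖x k - x0 k‖ - l)]
      calc (∑ k, ‖y k - x k‖ ^ 2) ≤ ∑ k, (2 * ‖x k - x0 k‖ ^ 2 + 2 * l ^ 2) :=
            Finset.sum_le_sum fun k _ => hpt k
        _ = 2 * A2 + 2 * (N:ℝ) * l ^ 2 := by
            rw [Finset.sum_add_distrib, Finset.sum_const, Finset.card_fin, nsmul_eq_mul,
              hA2, ← Finset.mul_sum]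
            ring
    have hb3 : (∑ k, ‖y k - x0 k‖ ^ 2) ≤ (N:ℝ) * l ^ 2 := by
      have hpt : ∀ k, ‖y k - x0 k‖ ^ 2 ≤ l ^ 2 := by
        intro k
        have e : y k - x0 k = -(l • u k) := by simp only [hy]; abel
        rw [e, norm_neg, norm_smul, Real.norm_eq_abs, abs_of_pos hl, mul_pow]
        have h5 : ‖u k‖ ^ 2 ≤ 1 := by nlinarith [hun k, norm_nonneg (u k)]
        calc l ^ 2 * ‖u k‖ ^ 2 ≤ l ^ 2 * 1 := mul_le_mul_of_nonneg_left h5 (sq_nonneg l)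
          _ = l ^ 2 := mul_one _
      calc (∑ k, ‖y k - x0 k‖ ^ 2) ≤ ∑ _k : Fin N, l ^ 2 := Finset.sum_le_sum fun k _ => hpt k
        _ = (N:ℝ) * l ^ 2 := by rw [Finset.sum_const, Finset.card_fin, nsmul_eq_mul]
    have hbt : Vt t x * (t0 - t) + Vt t0 x0 * (t - t0) ≤ 2 * C * T := by
      have e : Vt t x * (t0 - t) + Vt t0 x0 * (t - t0) = -((Vt t x - Vt t0 x0) * (t - t0)) := by
        ring
      have h1 : |(Vt t x - Vt t0 x0) * (t - t0)| ≤ 2 * C * T := by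
        rw [abs_mul, hT]
        have h2 : |Vt t x - Vt t0 x0| ≤ 2 * C := by
          have := abs_sub (Vt t x) (Vt t0 x0)
          linarith [hVt t x, hVt t0 x0]
        exact mul_le_mul_of_nonneg_right h2 (abs_nonneg _)
      rw [e]
      have h3 := neg_le_abs ((Vt t x - Vt t0 x0) * (t - t0))
      linarith
    have hq1 : (C / (N:ℝ)) * (∑ k, ‖y k - x k‖ ^ 2) ≤ 2 * C * A2 / (N:ℝ) + 2 * C * l ^ 2 := by
      have h1 : (C / (N:ℝ)) * (∑ k, ‖y k - x k‖ ^ 2)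
          ≤ (C / (N:ℝ)) * (2 * A2 + 2 * (N:ℝ) * l ^ 2) :=
        mul_le_mul_of_nonneg_left hb2 (by positivity)
      have h2 : (C / (N:ℝ)) * (2 * A2 + 2 * (N:ℝ) * l ^ 2)
          = 2 * C * A2 / (N:ℝ) + 2 * C * l ^ 2 := by field_simp
      linarith
    have hq2 : (1 / (2 * θ * (N:ℝ))) * (∑ k, ‖y k - x0 k‖ ^ 2) ≤ 1 / (2 * θ) * l ^ 2 := by
      have h1 : (1 / (2 * θ * (N:ℝ))) * (∑ k, ‖y k - x0 k‖ ^ 2)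
          ≤ (1 / (2 * θ * (N:ℝ))) * ((N:ℝ) * l ^ 2) :=
        mul_le_mul_of_nonneg_left hb3 (by positivity)
      have h2 : (1 / (2 * θ * (N:ℝ))) * ((N:ℝ) * l ^ 2) = 1 / (2 * θ) * l ^ 2 := by
        field_simp
      linarith
    have hq3 : 2 * C * l ^ 2 + 1 / (2 * θ) * l ^ 2 ≤ K * l ^ 2 := by
      have h1 : 2 * C * l ^ 2 ≤ (1 / θ) * l ^ 2 :=
        mul_le_mul_of_nonneg_right h2C1θ (sq_nonneg l)
      have h2 : (1 / θ) * l ^ 2 + 1 / (2 * θ) * l ^ 2 = K * l ^ 2 := by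
        rw [hK]; field_simp; ring
      linarith
    have he2 : (t0 - t) ^ 2 = T ^ 2 := by rw [hT, sq_abs]; ring
    have he3 : (t - t0) ^ 2 = T ^ 2 := by rw [hT, sq_abs]
    have he0 : (1 / (2 * θ)) * (t0 - t0) ^ 2 - Vt t0 x0 * (t0 - t0) = 0 := by ring
    rw [← hA2] at I2
    rw [he2] at I1
    rw [he3] at I2
    rw [he0] at I3
    rw [hD]
    ring_nf at I1 I2 I3 hsum_eq hb1 hbt hq1 hq2 hq3 ⊢
    linarith [I1, I2, I3, hsum_eq, hb1, hbt, hq1, hq2, hq3]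
  have hLbound : L ≤ 2 * Real.sqrt (K * D) := aux_opt hKpos hDn hkey
  -- final assembly
  set c' : ℝ := 36 * C + 12 with hc'
  have hc'pos : 0 < c' := by rw [hc']; positivity
  have hsum12 : ∑ k, (‖x k - x0 k‖ + ‖x k - x0 k‖ ^ 2) = A1 + A2 := by
    rw [Finset.sum_add_distrib, hA1, hA2]
  have hsqθ : 0 < Real.sqrt θ := Real.sqrt_pos.mpr hθ
  have hterm1 : 0 ≤ (c' / (N:ℝ)) * A1 := by positivity
  rw [hsum12]
  have hterm2 : (0:ℝ) ≤ Real.sqrt ((c' / ((N:ℝ) * θ)) * (A1 + A2)) := Real.sqrt_nonneg _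
  rcases le_or_gt θ T with hcase | hcase
  · -- T large : use the trivial Lipschitz bound
    have h1 : Real.sqrt θ ≤ Real.sqrt T := Real.sqrt_le_sqrt hcase
    have h2 : c' = (c' / Real.sqrt θ) * Real.sqrt θ := by field_simp
    have h3 : (c' / Real.sqrt θ) * Real.sqrt θ ≤ (c' / Real.sqrt θ) * Real.sqrt T :=
      mul_le_mul_of_nonneg_left h1 (by positivity)
    have h4 : L ≤ (c' / Real.sqrt θ) * Real.sqrt T := by
      have h5 : L ≤ c' := by rw [hc']; linarith
      linarith [h2 ▸ h3]
    rw [hT] at h4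
    linarith
  · -- T small : use the semiconcavity estimate
    set D' : ℝ := 2 * C * A1 / (N:ℝ) + 3 * C * A2 / (N:ℝ) + (2 * C + 1) * T with hD'
    have hDD' : D ≤ D' := by
      rw [hD, hD']
      have h1 : 2 * C * T ^ 2 ≤ T := by
        nlinarith [mul_le_mul_of_nonneg_left hcase.le (by positivity : (0:ℝ) ≤ 2 * C * T),
          mul_le_mul_of_nonneg_right hθC' hTn]
      linarith
    have hD'n : 0 ≤ D' := hDn.trans hDD'
    set a : ℝ := (c' / ((N:ℝ) * θ)) * (A1 + A2) with ha
    set b : ℝ := c' ^ 2 * (T / θ) with hb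
    have han : 0 ≤ a := by
      rw [ha]
      have hh : 0 ≤ A1 + A2 := by linarith
      positivity
    have hbn : 0 ≤ b := by
      rw [hb]
      have hh : 0 ≤ T / θ := div_nonneg hTn hθ.le
      positivity
    have hexpand : 4 * (K * D')
        = (12 * C * A1 + 18 * C * A2) / ((N:ℝ) * θ) + ((12 * C + 6) * T) / θ := by
      rw [hK, hD']
      field_simp
      ring
    have h4KD : 4 * (K * D') ≤ a + b := by
      rw [hexpand, ha, hb]
      have h1 : (12 * C * A1 + 18 * C * A2) / ((N:ℝ) * θ)
          ≤ (c' / ((N:ℝ) * θ)) * (A1 + A2) := by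
        rw [div_mul_eq_mul_div]
        refine div_le_div_of_nonneg_right ?_ (mul_pos hNR hθ).le
        rw [hc']
        nlinarith [mul_nonneg hC.le hA1n, mul_nonneg hC.le hA2n, hA1n, hA2n]
      have h2 : ((12 * C + 6) * T) / θ ≤ c' ^ 2 * (T / θ) := by
        rw [mul_div_assoc]
        have hcc : 12 * C + 6 ≤ c' ^ 2 := by rw [hc']; nlinarith
        exact mul_le_mul_of_nonneg_right hcc (div_nonneg hTn hθ.le)
      linarith
    have hs1 : 2 * Real.sqrt (K * D) = Real.sqrt (4 * (K * D)) := by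
      rw [show (4:ℝ) * (K * D) = 2 ^ 2 * (K * D) by ring,
        Real.sqrt_mul (by norm_num : (0:ℝ) ≤ 2 ^ 2), Real.sqrt_sq (by norm_num : (0:ℝ) ≤ 2)]
    have hs2 : Real.sqrt (4 * (K * D)) ≤ Real.sqrt (a + b) := by
      apply Real.sqrt_le_sqrt
      have hh : K * D ≤ K * D' := mul_le_mul_of_nonneg_left hDD' hKpos.le
      linarith
    have hs3 : Real.sqrt (a + b) ≤ Real.sqrt a + Real.sqrt b := aux_sqrt_add han hbn
    have hs4 : Real.sqrt b = (c' / Real.sqrt θ) * Real.sqrt T := by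
      rw [hb, Real.sqrt_mul (sq_nonneg c'), Real.sqrt_sq hc'pos.le,
        Real.sqrt_div hTn θ]
      ring
    have hfinal : L ≤ Real.sqrt a + (c' / Real.sqrt θ) * Real.sqrt T := by
      rw [← hs4]
      calc L ≤ 2 * Real.sqrt (K * D) := hLbound
        _ = Real.sqrt (4 * (K * D)) := hs1
        _ ≤ Real.sqrt (a + b) := hs2
        _ ≤ Real.sqrt a + Real.sqrt b := hs3
    rw [hT] at hfinal
    rw [ha] at hfinal
    linarith
end
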